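/- arXiv:0902.4149 — 2 statements merged into one kernel-verified Lean document; each statement's English description precedes it below -/
import Mathlib

section
/- Let $E$ be a real inner product space, $\epsilon\ge 0$, and let $\gamma:[0,1]\to E$ be twice continuously differentiable with $\|\gamma''(t)\|\le\epsilon$ for all $t\in[0,1]$. Then $\|\gamma(1)-\gamma(0)\|\ \ge\ \int_0^1\|\gamma'(t)\|\,dt\ -\ \epsilon$; i.e. the distance between the endpoints of an $\epsilon$-approximate geodesic is at least its length minus $\epsilon$. -/
/-- If `γ : [0,1] → E` is C² with `‖γ''‖ ≤ ε`, then the distance between its endpoints is at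
least its length minus `ε`. -/
theorem stmt13 {E : Type*} [NormedAddCommGroup E] [InnerProductSpace ℝ E]
    (ε : ℝ) (hε : 0 ≤ ε) (γ γ' γ'' : ℝ → E)
    (hd1 : ∀ t ∈ Set.Icc (0 : ℝ) 1, HasDerivAt γ (γ' t) t)
    (hd2 : ∀ t ∈ Set.Icc (0 : ℝ) 1, HasDerivAt γ' (γ'' t) t)
    (hcont : ContinuousOn γ'' (Set.Icc (0 : ℝ) 1))
    (hb : ∀ t ∈ Set.Icc (0 : ℝ) 1, ‖γ'' t‖ ≤ ε) :
    ‖γ 1 - γ 0‖ ≥ (∫ t in (0 : ℝ)..1, ‖γ' t‖) - ε := by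
  have h01 : (0:ℝ) ≤ 1 := zero_le_one
  have huIcc : Set.uIcc (0:ℝ) 1 = Set.Icc 0 1 := Set.uIcc_of_le h01
  have hmem : (1/2 : ℝ) ∈ Set.Icc (0:ℝ) 1 := by norm_num
  have hc' : ContinuousOn γ' (Set.Icc (0:ℝ) 1) :=
    fun t ht => (hd2 t ht).continuousAt.continuousWithinAt
  -- Lipschitz bound on γ'
  have hlip : ∀ t ∈ Set.Icc (0:ℝ) 1, ‖γ' t - γ' (1/2)‖ ≤ ε/2 := by
    intro t ht
    have := (convex_Icc (0:ℝ) 1).norm_image_sub_le_of_norm_hasDerivWithin_le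
      (f := γ') (f' := γ'') (fun x hx => (hd2 x hx).hasDerivWithinAt) hb hmem ht
    have habs : ‖t - 1/2‖ ≤ 1/2 := by
      rw [Real.norm_eq_abs, abs_sub_le_iff]
      constructor <;> [linarith [ht.2]; linarith [ht.1]]
    calc ‖γ' t - γ' (1/2)‖ ≤ ε * ‖t - 1/2‖ := this
      _ ≤ ε * (1/2) := by nlinarith [norm_nonneg (t - (1/2:ℝ))]
      _ = ε/2 := by ring
  have hint' : IntervalIntegrable (fun t => ‖γ' t‖) MeasureTheory.volume 0 1 :=
    (hc'.norm.mono (by rw [huIcc])).intervalIntegrable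
  by_cases hv : γ' (1/2) = 0
  · -- degenerate case
    have hbd : ∀ t ∈ Set.Icc (0:ℝ) 1, ‖γ' t‖ ≤ ε := by
      intro t ht
      have := hlip t ht
      rw [hv, sub_zero] at this
      linarith
    have hL : (∫ t in (0:ℝ)..1, ‖γ' t‖) ≤ ∫ _ in (0:ℝ)..1, ε := by
      apply intervalIntegral.integral_mono_on h01 hint' (intervalIntegrable_const)
      exact hbd
    simp only [intervalIntegral.integral_const, smul_eq_mul, sub_zero, one_mul] at hL
    have := norm_nonneg (γ 1 - γ 0)
    linarith
  · set v := γ' (1/2) with hvdef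
    set u := ‖v‖⁻¹ • v with hudef
    have hvn : (0:ℝ) < ‖v‖ := norm_pos_iff.mpr hv
    have hun : ‖u‖ = 1 := by
      rw [hudef, norm_smul, norm_inv, norm_norm, inv_mul_cancel₀ hvn.ne']
    -- pointwise lower bound
    have hpt : ∀ t ∈ Set.Icc (0:ℝ) 1, ‖γ' t‖ - ε ≤ (inner ℝ u (γ' t) : ℝ) := by
      intro t ht
      have h1 : (inner ℝ u (v) : ℝ) = ‖v‖ := by
        rw [hudef, real_inner_smul_left, real_inner_self_eq_norm_sq]
        field_simp
      have h2 : |(inner ℝ u (γ' t - v) : ℝ)| ≤ ε/2 := by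
        calc |(inner ℝ u (γ' t - v) : ℝ)| ≤ ‖u‖ * ‖γ' t - v‖ := abs_real_inner_le_norm u _
          _ = ‖γ' t - v‖ := by rw [hun, one_mul]
          _ ≤ ε/2 := hlip t ht
      have h3 : ‖γ' t‖ ≤ ‖v‖ + ε/2 := by
        have := hlip t ht
        have := norm_sub_norm_le (γ' t) v
        linarith
      have h4 : (inner ℝ u (γ' t) : ℝ) = ‖v‖ + (inner ℝ u (γ' t - v) : ℝ) := by
        rw [inner_sub_right, h1]; ring
      have := abs_le.mp h2
      linarith [this.1]
    -- inner-product function derivative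
    have hdi : ∀ t ∈ Set.Icc (0:ℝ) 1,
        HasDerivAt (fun s => (inner ℝ u (γ s) : ℝ)) (inner ℝ u (γ' t) : ℝ) t := by
      intro t ht
      exact (innerSL ℝ u).hasFDerivAt.comp_hasDerivAt t (hd1 t ht)
    have hci : ContinuousOn (fun t => (inner ℝ u (γ' t) : ℝ)) (Set.Icc (0:ℝ) 1) :=
      (innerSL ℝ u).continuous.comp_continuousOn hc'
    have hinti : IntervalIntegrable (fun t => (inner ℝ u (γ' t) : ℝ)) MeasureTheory.volume 0 1 :=
      (hci.mono (by rw [huIcc])).intervalIntegrable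
    have hFTC : (∫ t in (0:ℝ)..1, (inner ℝ u (γ' t) : ℝ)) = (inner ℝ u (γ 1) : ℝ) - (inner ℝ u (γ 0) : ℝ) := by
      apply intervalIntegral.integral_eq_sub_of_hasDerivAt (f := fun s => (inner ℝ u (γ s) : ℝ))
      · intro t ht; exact hdi t (huIcc ▸ ht)
      · exact hinti
    have hmono : (∫ t in (0:ℝ)..1, ‖γ' t‖ - ε) ≤ ∫ t in (0:ℝ)..1, (inner ℝ u (γ' t) : ℝ) := by
      apply intervalIntegral.integral_mono_on h01 (hint'.sub intervalIntegrable_const) hinti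
      exact hpt
    rw [intervalIntegral.integral_sub hint' intervalIntegrable_const] at hmono
    simp only [intervalIntegral.integral_const, smul_eq_mul, sub_zero, one_mul] at hmono
    have hfinal : (inner ℝ u (γ 1 - γ 0) : ℝ) ≤ ‖γ 1 - γ 0‖ := by
      calc (inner ℝ u (γ 1 - γ 0) : ℝ) ≤ ‖u‖ * ‖γ 1 - γ 0‖ := real_inner_le_norm u _
        _ = ‖γ 1 - γ 0‖ := by rw [hun, one_mul]
    rw [inner_sub_right] at hfinal
    linarith [hmono, hFTC ▸ hfinal]
end

section
/- Let $E$ be a real inner product space, $\epsilon\ge 0$, and let $\gamma:[0,1]\to E$ be twice continuously differentiable with $\|\gamma''(t)\|\le\epsilon$ for all $t\in[0,1]$. Let $\tilde\gamma(t)=(1-t)\gamma(0)+t\gamma(1)$ be the segment joining the endpoints, so that $\tilde\gamma'(t)=\gamma(1)-\gamma(0)$. Then $\|\gamma'(0)-\tilde\gamma'(0)\|^2\le \tfrac{9}{4}\epsilon^2+4\epsilon\,\|\gamma'(1)\|$ and $\|\gamma'(1)-\tilde\gamma'(1)\|^2\le \tfrac{9}{4}\epsilon^2+4\epsilon\,\|\gamma'(0)\|$.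 -/
/-- If `γ : [0,1] → E` is C² with `‖γ''‖ ≤ ε`, and `γ̃(t) = (1-t)γ(0) + tγ(1)` is the segment
joining its endpoints (so `γ̃' ≡ γ(1) - γ(0)`), then
`‖γ'(0) - γ̃'(0)‖² ≤ (9/4)ε² + 4ε‖γ'(1)‖` and `‖γ'(1) - γ̃'(1)‖² ≤ (9/4)ε² + 4ε‖γ'(0)‖`. -/
theorem stmt14 {E : Type*} [NormedAddCommGroup E] [InnerProductSpace ℝ E]
    (ε : ℝ) (hε : 0 ≤ ε) (γ γ' γ'' : ℝ → E)
    (hd1 : ∀ t ∈ Set.Icc (0 : ℝ) 1, HasDerivAt γ (γ' t) t)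
    (hd2 : ∀ t ∈ Set.Icc (0 : ℝ) 1, HasDerivAt γ' (γ'' t) t)
    (hcont : ContinuousOn γ'' (Set.Icc (0 : ℝ) 1))
    (hb : ∀ t ∈ Set.Icc (0 : ℝ) 1, ‖γ'' t‖ ≤ ε) :
    ‖γ' 0 - (γ 1 - γ 0)‖ ^ 2 ≤ 9 / 4 * ε ^ 2 + 4 * ε * ‖γ' 1‖ ∧
    ‖γ' 1 - (γ 1 - γ 0)‖ ^ 2 ≤ 9 / 4 * ε ^ 2 + 4 * ε * ‖γ' 0‖ := by
  have hconv : Convex ℝ (Set.Icc (0 : ℝ) 1) := convex_Icc 0 1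
  -- γ' is ε-Lipschitz on [0,1]
  have hlip : ∀ s ∈ Set.Icc (0 : ℝ) 1, ∀ t ∈ Set.Icc (0 : ℝ) 1, ‖γ' t - γ' s‖ ≤ ε := by
    intro s hs t ht
    have := hconv.norm_image_sub_le_of_norm_hasDerivWithin_le
      (fun x hx => (hd2 x hx).hasDerivWithinAt) hb hs ht
    have habs : ‖t - s‖ ≤ 1 := by
      rw [Real.norm_eq_abs, abs_le]
      constructor <;> linarith [hs.1, hs.2, ht.1, ht.2]
    calc ‖γ' t - γ' s‖ ≤ ε * ‖t - s‖ := this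
      _ ≤ ε * 1 := by exact mul_le_mul_of_nonneg_left habs hε
      _ = ε := mul_one ε
  -- main estimate : for c ∈ [0,1], ‖γ' c - (γ 1 - γ 0)‖ ≤ ε
  have key : ∀ c ∈ Set.Icc (0 : ℝ) 1, ‖γ' c - (γ 1 - γ 0)‖ ≤ ε := by
    intro c hc
    have hf : ∀ x ∈ Set.Icc (0 : ℝ) 1,
        HasDerivWithinAt (fun t => γ t - t • γ' c) (γ' x - γ' c) (Set.Icc (0 : ℝ) 1) x := by
      intro x hx
      exact ((hd1 x hx).sub ((hasDerivAt_id x).smul_const (γ' c))).hasDerivWithinAt.congr_deriv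
        (by simp)
    have hbnd : ∀ x ∈ Set.Icc (0 : ℝ) 1, ‖γ' x - γ' c‖ ≤ ε := fun x hx => hlip c hc x hx
    have h01 : (0 : ℝ) ∈ Set.Icc (0 : ℝ) 1 := by norm_num
    have h11 : (1 : ℝ) ∈ Set.Icc (0 : ℝ) 1 := by norm_num
    have hmvt := hconv.norm_image_sub_le_of_norm_hasDerivWithin_le hf hbnd h01 h11
    simp only [one_smul, zero_smul, sub_zero, norm_one, mul_one] at hmvt
    have heq : γ 1 - γ' c - γ 0 = -(γ' c - (γ 1 - γ 0)) := by abel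
    rw [heq, norm_neg] at hmvt
    exact hmvt
  have h0 := key 0 (by norm_num)
  have h1 := key 1 (by norm_num)
  constructor
  · nlinarith [norm_nonneg (γ' 0 - (γ 1 - γ 0)), norm_nonneg (γ' 1), mul_nonneg hε (norm_nonneg (γ' 1))]
  · nlinarith [norm_nonneg (γ' 1 - (γ 1 - γ 0)), norm_nonneg (γ' 0), mul_nonneg hε (norm_nonneg (γ' 0))]
end
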